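/- arXiv:2002.06281 — 6 statements merged into one kernel-verified Lean document; each statement's English description precedes it below -/
import Mathlib

section
/- If t ≥ 0 and either x < (k−1)X + t·w or x > kX + t·v_f, then the Lax–Hopf solution associated with the k-th initial value condition satisfies M_{M_k}(t, x) = +∞. -/
/-- The triangular fundamental diagram: `ψ(ρ) = v_f·ρ` for `ρ ≤ ρ_c` and
`ψ(ρ) = w·(ρ − ρ_m)` otherwise. -/
noncomputable def fd (vf w ρc ρm : ℝ) (ρ : ℝ) : ℝ :=
  if ρ ≤ ρc then vf * ρ else w * (ρ - ρm)

/-- The transform `φ*(u) = sup_{p ∈ [0, ρ_m]} (p·u + ψ(p))`. -/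
noncomputable def phiStar (vf w ρc ρm : ℝ) (u : ℝ) : ℝ :=
  sSup ((fun p => p * u + fd vf w ρc ρm p) '' Set.Icc 0 ρm)

/-- The Lax–Hopf solution associated with a value condition `c : ℝ × ℝ → ℝ ∪ {+∞}`
(modeled with values in `EReal`):
`M_c(t, x) = inf { c(t − T, x + T·u) + T·φ*(u) : T ≥ 0, u ∈ [−v_f, −w] }`. -/
noncomputable def laxHopf (vf w ρc ρm : ℝ) (c : ℝ × ℝ → EReal) (t x : ℝ) : EReal :=
  ⨅ (T : ℝ) (_ : 0 ≤ T) (u : ℝ) (_ : u ∈ Set.Icc (-vf) (-w)),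
    c (t - T, x + T * u) + ((T * phiStar vf w ρc ρm u : ℝ) : EReal)

/-- The `k`-th initial value condition: for `x ∈ [(k−1)X, kX]`,
`M_k(0, x) = −Σ_{i=1}^{k−1} ρ(i)·X − ρ(k)·(x − (k−1)X)`, and `+∞` elsewhere. -/
noncomputable def initCond (X : ℝ) (ρ : ℕ → ℝ) (k : ℕ) : ℝ × ℝ → EReal := fun p =>
  if p.1 = 0 ∧ ((k : ℝ) - 1) * X ≤ p.2 ∧ p.2 ≤ (k : ℝ) * X then
    (((-(∑ i ∈ Finset.Icc 1 (k - 1), ρ i * X) - ρ k * (p.2 - ((k : ℝ) - 1) * X)) : ℝ) : EReal)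
  else ⊤

/-- If `t ≥ 0` and either `x < (k−1)X + t·w` or `x > kX + t·v_f`, then
`M_{M_k}(t, x) = +∞`. -/
theorem laxHopf_initCond_top (vf ρc ρm w X : ℝ) (hvf : 0 < vf) (hρc : 0 < ρc)
    (hρcm : ρc < ρm) (hw : w = vf * ρc / (ρc - ρm)) (hX : 0 < X)
    (kmax : ℕ) (hkmax : 1 ≤ kmax) (ρ : ℕ → ℝ)
    (hρ : ∀ i : ℕ, 1 ≤ i → i ≤ kmax → ρ i ∈ Set.Icc 0 ρm)
    (k : ℕ) (hk1 : 1 ≤ k) (hk2 : k ≤ kmax) (t x : ℝ) (ht : 0 ≤ t)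
    (hx : x < ((k : ℝ) - 1) * X + t * w ∨ x > (k : ℝ) * X + t * vf) :
    laxHopf vf w ρc ρm (initCond X ρ k) t x = ⊤ := by
  simp only [laxHopf, iInf_eq_top]
  intro T hT u hu
  suffices h : initCond X ρ k (t - T, x + T * u) = ⊤ by
    rw [h]; exact EReal.top_add_coe _
  rw [initCond]
  rw [if_neg]
  rintro ⟨h0, h1, h2⟩
  have hTt : T = t := by simp at h0; linarith
  subst hTt
  obtain ⟨hu1, hu2⟩ := hu
  rcases hx with hx | hx
  · have : T * u ≤ T * (-w) := mul_le_mul_of_nonneg_left hu2 ht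
    simp only at h1
    linarith
  · have : T * (-vf) ≤ T * u := mul_le_mul_of_nonneg_left hu1 ht
    simp only at h2
    linarith
end

section
/- If t ≥ 0, ρ(k) ≤ ρ_c, and (k−1)X + t·v_f ≤ x ≤ kX + t·v_f, then the Lax–Hopf solution associated with the k-th initial value condition satisfies M_{M_k}(t, x) = −Σ_{i=1}^{k−1} ρ(i)·X + ρ(k)·(t·v_f + (k−1)X − x). -/
lemma phiStar_eq (vf ρc ρm w : ℝ) (hvf : 0 < vf) (hρc : 0 < ρc) (hρcm : ρc < ρm)
    (hw : w = vf * ρc / (ρc - ρm)) (u : ℝ) (hu1 : -vf ≤ u) (hu2 : u ≤ -w) :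
    phiStar vf w ρc ρm u = ρc * (u + vf) := by
  have hden : ρc - ρm ≠ 0 := by linarith
  have hkey : w * (ρc - ρm) = vf * ρc := by
    rw [hw]; field_simp
  apply IsGreatest.csSup_eq
  constructor
  · exact ⟨ρc, ⟨le_of_lt hρc, le_of_lt hρcm⟩, by simp [fd]; ring⟩
  · rintro y ⟨p, ⟨hp0, hpm⟩, rfl⟩
    simp only [fd]
    split_ifs with h
    · nlinarith [mul_nonneg (sub_nonneg.2 h) (by linarith : (0:ℝ) ≤ u + vf)]
    · push_neg at h
      nlinarith [mul_nonneg (sub_nonneg.2 (le_of_lt h)) (by linarith : (0:ℝ) ≤ -(u + w))]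

/-- If `t ≥ 0`, `ρ(k) ≤ ρ_c`, and `(k−1)X + t·v_f ≤ x ≤ kX + t·v_f`, then
`M_{M_k}(t, x) = −Σ_{i=1}^{k−1} ρ(i)·X + ρ(k)·(t·v_f + (k−1)X − x)`. -/
theorem laxHopf_initCond_freeflow_inner (vf ρc ρm w X : ℝ) (hvf : 0 < vf) (hρc : 0 < ρc)
    (hρcm : ρc < ρm) (hw : w = vf * ρc / (ρc - ρm)) (hX : 0 < X)
    (kmax : ℕ) (hkmax : 1 ≤ kmax) (ρ : ℕ → ℝ)
    (hρ : ∀ i : ℕ, 1 ≤ i → i ≤ kmax → ρ i ∈ Set.Icc 0 ρm)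
    (k : ℕ) (hk1 : 1 ≤ k) (hk2 : k ≤ kmax) (t x : ℝ) (ht : 0 ≤ t)
    (hρk : ρ k ≤ ρc)
    (hx1 : ((k : ℝ) - 1) * X + t * vf ≤ x) (hx2 : x ≤ (k : ℝ) * X + t * vf) :
    laxHopf vf w ρc ρm (initCond X ρ k) t x =
      (((-(∑ i ∈ Finset.Icc 1 (k - 1), ρ i * X)
          + ρ k * (t * vf + ((k : ℝ) - 1) * X - x)) : ℝ) : EReal) := by
  have hwneg : w < 0 := by
    rw [hw]
    apply div_neg_of_pos_of_neg (by positivity) (by linarith)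
  have hmem : (-vf) ∈ Set.Icc (-vf) (-w) := ⟨le_refl _, by linarith⟩
  set S : ℝ := ∑ i ∈ Finset.Icc 1 (k - 1), ρ i * X with hS
  apply le_antisymm
  · -- upper bound: take T = t, u = -vf
    unfold laxHopf
    refine iInf_le_of_le t ?_
    refine iInf_le_of_le ht ?_
    refine iInf_le_of_le (-vf) ?_
    refine iInf_le_of_le hmem ?_
    have hcond : (t - t = 0) ∧ ((k : ℝ) - 1) * X ≤ x + t * (-vf) ∧ x + t * (-vf) ≤ (k : ℝ) * X :=
      ⟨by ring, by linarith, by linarith⟩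
    rw [initCond, if_pos hcond, phiStar_eq vf ρc ρm w hvf hρc hρcm hw (-vf) hmem.1 hmem.2]
    rw [← EReal.coe_add, EReal.coe_le_coe_iff]
    have : (-vf + vf) = 0 := by ring
    rw [this]
    ring_nf
    linarith
  · -- lower bound
    unfold laxHopf
    refine le_iInf fun T => le_iInf fun hT => le_iInf fun u => le_iInf fun hu => ?_
    rw [initCond]
    split_ifs with h
    · obtain ⟨hT0, hlo, hhi⟩ := h
      simp only at hT0 hlo hhi
      have hTt : T = t := by linarith [sub_eq_zero.mp hT0]
      subst hTt
      rw [phiStar_eq vf ρc ρm w hvf hρc hρcm hw u hu.1 hu.2]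
      rw [← EReal.coe_add, EReal.coe_le_coe_iff]
      simp only [← hS]
      have h1 : 0 ≤ u + vf := by linarith [hu.1]
      have h2 : 0 ≤ ρc - ρ k := by linarith
      nlinarith [mul_nonneg (mul_nonneg ht h1) h2]
    · have : (⊤ : EReal) + ((T * phiStar vf w ρc ρm u : ℝ) : EReal) = ⊤ :=
        EReal.top_add_coe _
      rw [this]
      exact le_top
end

section
/- If x ≥ 0 and t < (n−1)T + x/v_f, then the Lax–Hopf solution associated with the n-th upstream boundary value condition satisfies M_{γ_n}(t, x) = +∞. -/
/-- The `n`-th upstream boundary value condition (at position `0`): for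
`t ∈ [(n−1)T, nT]`, `γ_n(t, 0) = Σ_{i=1}^{n−1} q_in(i)·T + q_in(n)·(t − (n−1)T)`,
and `+∞` elsewhere. -/
noncomputable def upCond (T : ℝ) (qin : ℕ → ℝ) (n : ℕ) : ℝ × ℝ → EReal := fun p =>
  if p.2 = 0 ∧ ((n : ℝ) - 1) * T ≤ p.1 ∧ p.1 ≤ (n : ℝ) * T then
    ((((∑ i ∈ Finset.Icc 1 (n - 1), qin i * T)
        + qin n * (p.1 - ((n : ℝ) - 1) * T)) : ℝ) : EReal)
  else ⊤

/-- If `x ≥ 0` and `t < (n−1)T + x/v_f`, then `M_{γ_n}(t, x) = +∞`. -/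
theorem laxHopf_upCond_top (vf ρc ρm w T : ℝ) (hvf : 0 < vf) (hρc : 0 < ρc)
    (hρcm : ρc < ρm) (hw : w = vf * ρc / (ρc - ρm)) (hT : 0 < T)
    (n : ℕ) (hn : 1 ≤ n) (qin : ℕ → ℝ)
    (hq : ∀ i : ℕ, 1 ≤ i → i ≤ n → qin i ∈ Set.Icc 0 (ρc * vf))
    (t x : ℝ) (hx : 0 ≤ x) (ht : t < ((n : ℝ) - 1) * T + x / vf) :
    laxHopf vf w ρc ρm (upCond T qin n) t x = ⊤ := by
  rw [laxHopf]
  simp only [iInf_eq_top]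
  intro S hS u hu
  have hcond : ¬ ((x + S * u = 0) ∧ ((n:ℝ)-1)*T ≤ t - S ∧ t - S ≤ (n:ℝ)*T) := by
    rintro ⟨h1, h2, _⟩
    have hSle : x ≤ S * vf := by nlinarith [hu.1]
    have hdiv : x / vf ≤ S := (div_le_iff₀ hvf).2 (by linarith)
    linarith
  rw [upCond]
  simp only [hcond, if_false]
  rw [EReal.top_add_of_ne_bot]
  exact EReal.coe_ne_bot _
end

section
/- If x ≥ 0 and (n−1)T + x/v_f ≤ t ≤ nT + x/v_f, then the Lax–Hopf solution associated with the n-th upstream boundary value condition satisfies M_{γ_n}(t, x) = Σ_{i=1}^{n−1} q_in(i)·T + q_in(n)·(t − x/v_f − (n−1)T). -/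
/-!
Along the free-flow characteristic `u = -v_f`, which leaves the boundary at time `t - x/v_f`,
`φ*(-v_f) = 0`, so `M_{γ_n}(t, x) ≤ γ_n(t - x/v_f, 0)`, the claimed value. Conversely, a
characteristic of speed `-u` reaching `x` from the boundary takes a time `S ≥ x/v_f`, and since
`φ*(u) ≥ ρ_c·u + v_f·ρ_c` (take `p = ρ_c`) its cost `S·φ*(u)` is at least `ρ_c·v_f·(S - x/v_f)`,
which pays for the inflow `q_in(n) ≤ ρ_c·v_f` over the extra delay `S - x/v_f`.
-/

open Set

section FundamentalDiagram

variable {vf w ρc ρm : ℝ}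

theorem fd_zero (hρc : 0 ≤ ρc) : fd vf w ρc ρm 0 = 0 := by
  simp [fd, hρc]

theorem fd_le_of_mem_Icc {p : ℝ} (hp : p ∈ Icc 0 ρm) :
    fd vf w ρc ρm p ≤ (|vf| + |w|) * ρm := by
  obtain ⟨hp0, hpm⟩ := hp
  unfold fd
  split_ifs
  · nlinarith [le_abs_self vf, neg_abs_le vf, abs_nonneg w]
  · nlinarith [le_abs_self w, neg_abs_le w, abs_nonneg vf]

theorem bddAbove_phiStar_image (u : ℝ) :
    BddAbove ((fun p => p * u + fd vf w ρc ρm p) '' Icc 0 ρm) := by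
  refine ⟨ρm * |u| + (|vf| + |w|) * ρm, ?_⟩
  rintro _ ⟨p, hp, rfl⟩
  have hpu : p * u ≤ ρm * |u| := by
    nlinarith [hp.1, hp.2, le_abs_self u, abs_nonneg u]
  linarith [fd_le_of_mem_Icc (vf := vf) (w := w) (ρc := ρc) hp]

theorem le_phiStar {p : ℝ} (hp : p ∈ Icc 0 ρm) (u : ℝ) :
    p * u + fd vf w ρc ρm p ≤ phiStar vf w ρc ρm u :=
  le_csSup (bddAbove_phiStar_image u) ⟨p, hp, rfl⟩

theorem mul_add_le_phiStar (hρc : 0 ≤ ρc) (hρcm : ρc ≤ ρm) (u : ℝ) :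
    ρc * u + vf * ρc ≤ phiStar vf w ρc ρm u := by
  simpa [fd] using le_phiStar (vf := vf) (w := w) (ρc := ρc) ⟨hρc, hρcm⟩ u

/-- Continuity of the diagram at `ρ_c` makes `p ↦ -v_f·p + ψ(p) = (w - v_f)(p - ρ_c)` on the
congested branch. -/
theorem phiStar_neg_vf (hρc : 0 ≤ ρc) (hρcm : ρc ≤ ρm) (hwvf : w ≤ vf)
    (hcont : w * (ρc - ρm) = vf * ρc) : phiStar vf w ρc ρm (-vf) = 0 := by
  refine le_antisymm (csSup_le ((nonempty_Icc.mpr (hρc.trans hρcm)).image _) ?_) ?_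
  · rintro _ ⟨p, ⟨hp0, hpm⟩, rfl⟩
    simp only [fd]
    split_ifs with hp
    · linarith
    · nlinarith [mul_nonpos_of_nonpos_of_nonneg (sub_nonpos.mpr hwvf)
        (sub_nonneg.mpr (not_le.mp hp).le)]
  · simpa [fd_zero hρc] using
      le_phiStar (vf := vf) (w := w) (ρc := ρc) ⟨le_rfl, hρc.trans hρcm⟩ (-vf)

theorem mul_sub_div_le_mul_phiStar (hvf : 0 < vf) (hρc : 0 ≤ ρc) (hρcm : ρc ≤ ρm)
    {q x S u : ℝ} (hq : q ≤ ρc * vf) (hS : 0 ≤ S) (hu : -vf ≤ u) (hxu : x + S * u = 0) :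
    q * (S - x / vf) ≤ S * phiStar vf w ρc ρm u := by
  obtain rfl : x = -(S * u) := by linarith
  have hdelay : -(S * u) / vf ≤ S := by
    rw [div_le_iff₀ hvf]
    nlinarith
  calc q * (S - -(S * u) / vf) ≤ ρc * vf * (S - -(S * u) / vf) :=
        mul_le_mul_of_nonneg_right hq (sub_nonneg.mpr hdelay)
    _ = S * (ρc * u + vf * ρc) := by field_simp; ring
    _ ≤ S * phiStar vf w ρc ρm u := mul_le_mul_of_nonneg_left (mul_add_le_phiStar hρc hρcm u) hS

end FundamentalDiagram

section LaxHopf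

variable {vf w ρc ρm : ℝ} {c : ℝ × ℝ → EReal} {t x : ℝ}

theorem laxHopf_le {S u : ℝ} (hS : 0 ≤ S) (hu : u ∈ Icc (-vf) (-w)) :
    laxHopf vf w ρc ρm c t x ≤ c (t - S, x + S * u) + ((S * phiStar vf w ρc ρm u : ℝ) : EReal) :=
  (iInf₂_le S hS).trans (iInf₂_le u hu)

theorem le_laxHopf {m : EReal}
    (h : ∀ S, 0 ≤ S → ∀ u ∈ Icc (-vf) (-w),
      m ≤ c (t - S, x + S * u) + ((S * phiStar vf w ρc ρm u : ℝ) : EReal)) :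
    m ≤ laxHopf vf w ρc ρm c t x :=
  le_iInf₂ fun S hS => le_iInf₂ (h S hS)

end LaxHopf

theorem upCond_apply_of_mem {T : ℝ} {qin : ℕ → ℝ} {n : ℕ} {s : ℝ}
    (hs : s ∈ Icc (((n : ℝ) - 1) * T) ((n : ℝ) * T)) :
    upCond T qin n (s, 0) =
      ((((∑ i ∈ Finset.Icc 1 (n - 1), qin i * T) + qin n * (s - ((n : ℝ) - 1) * T)) : ℝ) :
        EReal) :=
  if_pos ⟨rfl, hs⟩

theorem laxHopf_upCond_mid_general (vf ρc ρm w T : ℝ) (hvf : 0 < vf) (hρc : 0 < ρc)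
    (hρcm : ρc < ρm) (hw : w = vf * ρc / (ρc - ρm))
    (n : ℕ) (hn : 1 ≤ n) (qin : ℕ → ℝ)
    (hq : ∀ i : ℕ, 1 ≤ i → i ≤ n → qin i ∈ Set.Icc 0 (ρc * vf))
    (t x : ℝ) (hx : 0 ≤ x)
    (ht1 : ((n : ℝ) - 1) * T + x / vf ≤ t) (ht2 : t ≤ (n : ℝ) * T + x / vf) :
    laxHopf vf w ρc ρm (upCond T qin n) t x =
      ((((∑ i ∈ Finset.Icc 1 (n - 1), qin i * T)
          + qin n * (t - x / vf - ((n : ℝ) - 1) * T)) : ℝ) : EReal) := by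
  have hcont : w * (ρc - ρm) = vf * ρc := by
    rw [hw, div_mul_cancel₀ _ (sub_ne_zero.mpr hρcm.ne)]
  have hw0 : w < 0 := by nlinarith
  refine le_antisymm ?_ (le_laxHopf fun S hS u hu => ?_)
  · have hfree : x + x / vf * -vf = 0 := by field_simp; ring
    calc laxHopf vf w ρc ρm (upCond T qin n) t x
        ≤ upCond T qin n (t - x / vf, x + x / vf * -vf)
            + ((x / vf * phiStar vf w ρc ρm (-vf) : ℝ) : EReal) :=
          laxHopf_le (div_nonneg hx hvf.le) ⟨le_rfl, by linarith⟩
      _ = _ := by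
          rw [hfree, phiStar_neg_vf hρc.le hρcm.le (by linarith) hcont, mul_zero,
            EReal.coe_zero, add_zero, upCond_apply_of_mem ⟨by linarith, by linarith⟩]
  · unfold upCond
    split_ifs with hc
    · obtain ⟨hxu, -⟩ := hc
      rw [← EReal.coe_add, EReal.coe_le_coe_iff]
      have := mul_sub_div_le_mul_phiStar (w := w) hvf hρc.le hρcm.le (hq n hn le_rfl).2 hS
        hu.1 hxu
      linarith
    · rw [EReal.top_add_coe]
      exact le_top

/-- If `x ≥ 0` and `(n−1)T + x/v_f ≤ t ≤ nT + x/v_f`, then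
`M_{γ_n}(t, x) = Σ_{i=1}^{n−1} q_in(i)·T + q_in(n)·(t − x/v_f − (n−1)T)`. -/
theorem laxHopf_upCond_mid (vf ρc ρm w T : ℝ) (hvf : 0 < vf) (hρc : 0 < ρc)
    (hρcm : ρc < ρm) (hw : w = vf * ρc / (ρc - ρm)) (hT : 0 < T)
    (n : ℕ) (hn : 1 ≤ n) (qin : ℕ → ℝ)
    (hq : ∀ i : ℕ, 1 ≤ i → i ≤ n → qin i ∈ Set.Icc 0 (ρc * vf))
    (t x : ℝ) (hx : 0 ≤ x)
    (ht1 : ((n : ℝ) - 1) * T + x / vf ≤ t) (ht2 : t ≤ (n : ℝ) * T + x / vf) :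
    laxHopf vf w ρc ρm (upCond T qin n) t x =
      ((((∑ i ∈ Finset.Icc 1 (n - 1), qin i * T)
          + qin n * (t - x / vf - ((n : ℝ) - 1) * T)) : ℝ) : EReal) :=
  laxHopf_upCond_mid_general vf ρc ρm w T hvf hρc hρcm hw n hn qin hq t x hx ht1 ht2
end

section
/- If x ≤ χ and (n−1)T + (x−χ)/w ≤ t ≤ nT + (x−χ)/w, then the Lax–Hopf solution associated with the n-th downstream boundary value condition satisfies M_{β_n}(t, x) = −Σ_{k=1}^{k_max} ρ(k)·X + Σ_{i=1}^{n−1} q_out(i)·T + q_out(n)·(t − (x−χ)/w − (n−1)T) − ρ_m·(x − χ). -/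
/-- The `n`-th downstream boundary value condition (at position `χ`): for
`t ∈ [(n−1)T, nT]`,
`β_n(t, χ) = −Σ_{k=1}^{k_max} ρ(k)·X + Σ_{i=1}^{n−1} q_out(i)·T + q_out(n)·(t − (n−1)T)`,
and `+∞` elsewhere. -/
noncomputable def downCond (T χ X : ℝ) (ρ : ℕ → ℝ) (kmax : ℕ) (qout : ℕ → ℝ) (n : ℕ) :
    ℝ × ℝ → EReal := fun p =>
  if p.2 = χ ∧ ((n : ℝ) - 1) * T ≤ p.1 ∧ p.1 ≤ (n : ℝ) * T then
    (((-(∑ k ∈ Finset.Icc 1 kmax, ρ k * X) + (∑ i ∈ Finset.Icc 1 (n - 1), qout i * T)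
        + qout n * (p.1 - ((n : ℝ) - 1) * T)) : ℝ) : EReal)
  else ⊤

lemma phiStar_eq_aux (vf ρc ρm w : ℝ) (hρc : 0 < ρc) (hρcm : ρc < ρm)
    (hwk : w * (ρc - ρm) = vf * ρc) (u : ℝ) (hu : u ∈ Set.Icc (-vf) (-w)) :
    phiStar vf w ρc ρm u = ρc * (u + vf) := by
  apply IsGreatest.csSup_eq
  constructor
  · exact ⟨ρc, ⟨hρc.le, hρcm.le⟩, by simp only [fd, if_pos le_rfl]; ring⟩
  · rintro y ⟨p, ⟨hp0, hpm⟩, rfl⟩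
    by_cases h : p ≤ ρc
    · simp only [fd, if_pos h]
      nlinarith [mul_nonneg (sub_nonneg.2 h) (by linarith [hu.1] : (0:ℝ) ≤ u + vf)]
    · simp only [fd, if_neg h]
      push_neg at h
      nlinarith [mul_nonneg (by linarith : (0:ℝ) ≤ p - ρc) (by linarith [hu.2] : (0:ℝ) ≤ -w - u)]

/-- If `x ≤ χ` and `(n−1)T + (x−χ)/w ≤ t ≤ nT + (x−χ)/w`, then
`M_{β_n}(t, x) = −Σ_{k=1}^{k_max} ρ(k)·X + Σ_{i=1}^{n−1} q_out(i)·T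
+ q_out(n)·(t − (x−χ)/w − (n−1)T) − ρ_m·(x − χ)`. -/
theorem laxHopf_downCond_mid (vf ρc ρm w T χ X : ℝ) (hvf : 0 < vf) (hρc : 0 < ρc)
    (hρcm : ρc < ρm) (hw : w = vf * ρc / (ρc - ρm)) (hT : 0 < T) (hχ : 0 < χ)
    (kmax : ℕ) (hkmax : 1 ≤ kmax) (hX : X = χ / (kmax : ℝ)) (ρ : ℕ → ℝ)
    (hρ : ∀ i : ℕ, 1 ≤ i → i ≤ kmax → ρ i ∈ Set.Icc 0 ρm)
    (n : ℕ) (hn : 1 ≤ n) (qout : ℕ → ℝ)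
    (hq : ∀ i : ℕ, 1 ≤ i → i ≤ n → qout i ∈ Set.Icc 0 (ρc * vf))
    (t x : ℝ) (hx : x ≤ χ)
    (ht1 : ((n : ℝ) - 1) * T + (x - χ) / w ≤ t) (ht2 : t ≤ (n : ℝ) * T + (x - χ) / w) :
    laxHopf vf w ρc ρm (downCond T χ X ρ kmax qout n) t x =
      (((-(∑ k ∈ Finset.Icc 1 kmax, ρ k * X) + (∑ i ∈ Finset.Icc 1 (n - 1), qout i * T)
          + qout n * (t - (x - χ) / w - ((n : ℝ) - 1) * T) - ρm * (x - χ)) : ℝ) : EReal) := by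
  have hwneg : w < 0 := by
    rw [hw]
    apply div_neg_of_pos_of_neg
    · positivity
    · linarith
  have hwne : w ≠ 0 := ne_of_lt hwneg
  have hwk : w * (ρc - ρm) = vf * ρc := by
    have h : ρc - ρm ≠ 0 := by linarith
    rw [hw, div_mul_cancel₀ _ h]
  set s := (x - χ) / w with hs_def
  have hws : w * s = x - χ := by
    rw [hs_def]; field_simp
  have hs0 : 0 ≤ s := by nlinarith
  obtain ⟨hq0, hq1⟩ := hq n hn le_rfl
  have hmem : -w ∈ Set.Icc (-vf) (-w) := ⟨by linarith, le_rfl⟩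
  rw [laxHopf]
  apply le_antisymm
  · refine iInf_le_of_le s <| iInf_le_of_le hs0 <| iInf_le_of_le (-w) <|
      iInf_le_of_le hmem ?_
    have hx2 : x + s * (-w) = χ := by nlinarith
    rw [hx2, phiStar_eq_aux vf ρc ρm w hρc hρcm hwk (-w) hmem]
    simp only [downCond]
    rw [if_pos ⟨trivial, by linarith, by linarith⟩]
    rw [← EReal.coe_add, EReal.coe_le_coe_iff]
    have key : s * (ρc * (-w + vf)) = -(ρm * (x - χ)) := by nlinarith [hwk, hws]
    linarith [key]
  · refine le_iInf fun Tb => le_iInf fun hTb => le_iInf fun u => le_iInf fun hu => ?_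
    simp only [downCond]
    by_cases hc : x + Tb * u = χ ∧ ((n : ℝ) - 1) * T ≤ t - Tb ∧ t - Tb ≤ (n : ℝ) * T
    · rw [if_pos hc, phiStar_eq_aux vf ρc ρm w hρc hρcm hwk u hu]
      rw [← EReal.coe_add, EReal.coe_le_coe_iff]
      obtain ⟨hc1, hc2, hc3⟩ := hc
      have hTu : Tb * u = χ - x := by linarith
      have hTs : s ≤ Tb := by nlinarith [mul_le_mul_of_nonneg_left hu.2 hTb, hws, hwneg]
      have h1 : ρc * (Tb * u) = ρc * (χ - x) := by rw [hTu]
      have h4 : 0 ≤ (Tb - s) * (ρc * vf - qout n) :=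
        mul_nonneg (by linarith) (by linarith)
      have h5 : ρm * (x - χ) = ρm * (w * s) := by rw [hws]
      have h2 : w * (ρc - ρm) * s = vf * ρc * s := by rw [hwk]
      nlinarith [h1, h4, h5, h2]
    · rw [if_neg hc,
        EReal.top_add_of_ne_bot (EReal.coe_ne_bot (Tb * phiStar vf w ρc ρm u))]
      exact le_top
end

section
/- If x ≤ χ and t > nT + (x−χ)/w, then the Lax–Hopf solution associated with the n-th downstream boundary value condition satisfies M_{β_n}(t, x) = −Σ_{k=1}^{k_max} ρ(k)·X + Σ_{i=1}^{n} q_out(i)·T + ρ_c·v_f·(t − nT − (x−χ)/v_f). -/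
lemma phiStar_eq_on (vf ρc ρm w : ℝ) (hρc : 0 < ρc)
    (hρcm : ρc < ρm) (hw : w = vf * ρc / (ρc - ρm)) (u : ℝ)
    (hu : u ∈ Set.Icc (-vf) (-w)) :
    phiStar vf w ρc ρm u = ρc * (u + vf) := by
  have hwc : w * (ρc - ρm) = vf * ρc := by
    rw [hw, div_mul_eq_mul_div, mul_div_assoc]
    rw [div_self (by linarith : ρc - ρm ≠ 0), mul_one]
  apply IsGreatest.csSup_eq
  constructor
  · exact ⟨ρc, ⟨hρc.le, hρcm.le⟩, by simp [fd]; ring⟩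
  · rintro y ⟨p, ⟨hp0, hpm⟩, rfl⟩
    simp only [fd]
    split_ifs with h
    · nlinarith [hu.1, hu.2, mul_nonneg (sub_nonneg.mpr h) (by linarith [hu.1] : (0:ℝ) ≤ u + vf)]
    · push_neg at h
      nlinarith [hu.2, mul_nonneg (by linarith : (0:ℝ) ≤ p - ρc) (by linarith [hu.2] : (0:ℝ) ≤ -w - u)]

/-- If `x ≤ χ` and `t > nT + (x−χ)/w`, then
`M_{β_n}(t, x) = −Σ_{k=1}^{k_max} ρ(k)·X + Σ_{i=1}^{n} q_out(i)·T
+ ρ_c·v_f·(t − nT − (x−χ)/v_f)`. -/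
theorem laxHopf_downCond_late (vf ρc ρm w T χ X : ℝ) (hvf : 0 < vf) (hρc : 0 < ρc)
    (hρcm : ρc < ρm) (hw : w = vf * ρc / (ρc - ρm)) (hT : 0 < T) (hχ : 0 < χ)
    (kmax : ℕ) (hkmax : 1 ≤ kmax) (hX : X = χ / (kmax : ℝ)) (ρ : ℕ → ℝ)
    (hρ : ∀ i : ℕ, 1 ≤ i → i ≤ kmax → ρ i ∈ Set.Icc 0 ρm)
    (n : ℕ) (hn : 1 ≤ n) (qout : ℕ → ℝ)
    (hq : ∀ i : ℕ, 1 ≤ i → i ≤ n → qout i ∈ Set.Icc 0 (ρc * vf))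
    (t x : ℝ) (hx : x ≤ χ)
    (ht : t > (n : ℝ) * T + (x - χ) / w) :
    laxHopf vf w ρc ρm (downCond T χ X ρ kmax qout n) t x =
      (((-(∑ k ∈ Finset.Icc 1 kmax, ρ k * X) + (∑ i ∈ Finset.Icc 1 n, qout i * T)
          + ρc * vf * (t - (n : ℝ) * T - (x - χ) / vf)) : ℝ) : EReal) := by
  have hwneg : w < 0 := by
    rw [hw]
    apply div_neg_of_pos_of_neg (by positivity) (by linarith)
  have hdw : (x - χ) / w = (χ - x) / (-w) := by
    rw [div_neg]; ring
  have hdnn : 0 ≤ (χ - x) / (-w) := div_nonneg (by linarith) (by linarith)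
  set t0 : ℝ := t - (n : ℝ) * T with ht0def
  have ht0pos : 0 < t0 := by
    have : (x - χ) / w < t0 := by simp only [ht0def]; linarith
    rw [hdw] at this; linarith
  set u0 : ℝ := (χ - x) / t0 with hu0def
  have hu0u : t0 * u0 = χ - x := mul_div_cancel₀ _ ht0pos.ne'
  have hu0mem : u0 ∈ Set.Icc (-vf) (-w) := by
    constructor
    · have h0 : 0 ≤ u0 := div_nonneg (by linarith) ht0pos.le
      linarith
    · rw [hu0def, div_le_iff₀ ht0pos]
      have h1 : (χ - x) / (-w) < t0 := by
        rw [← hdw]; simp only [ht0def]; linarith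
      have := (div_lt_iff₀ (by linarith : (0:ℝ) < -w)).mp h1
      nlinarith
  have hvfd : vf * ((x - χ) / vf) = x - χ := by
    field_simp
  have hsum : ∑ i ∈ Finset.Icc 1 n, qout i * T
      = (∑ i ∈ Finset.Icc 1 (n - 1), qout i * T) + qout n * T := by
    obtain ⟨m, rfl⟩ : ∃ m, n = m + 1 := ⟨n - 1, (Nat.succ_pred_eq_of_pos hn).symm⟩
    rw [Finset.sum_Icc_succ_top (Nat.le_add_left 1 m)]
    simp
  have hqn := hq n hn le_rfl
  apply le_antisymm
  · -- upper bound: choose T' = t0, u = u0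
    unfold laxHopf
    refine iInf_le_of_le t0 ?_
    refine iInf_le_of_le ht0pos.le ?_
    refine iInf_le_of_le u0 ?_
    refine iInf_le_of_le hu0mem ?_
    have hpt : x + t0 * u0 = χ := by rw [hu0u]; ring
    have hcond : (x + t0 * u0 = χ) ∧ ((n : ℝ) - 1) * T ≤ t - t0 ∧ t - t0 ≤ (n : ℝ) * T := by
      refine ⟨hpt, by simp only [ht0def]; linarith, by simp only [ht0def]; linarith⟩
    rw [downCond, if_pos hcond, phiStar_eq_on vf ρc ρm w hρc hρcm hw u0 hu0mem,
      ← EReal.coe_add, EReal.coe_le_coe_iff]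
    simp only [Prod.fst]
    have ht1 : t - t0 = (n : ℝ) * T := by simp only [ht0def]; ring
    rw [ht1, hsum]
    have h4 : ρc * (t0 * u0) = ρc * (χ - x) := by rw [hu0u]
    have hvfd2 : ρc * vf * ((x - χ) / vf) = ρc * (x - χ) := by
      field_simp
    clear_value t0 u0
    linarith [h4, hvfd2]
  · -- lower bound
    unfold laxHopf
    refine le_iInf fun T' => le_iInf fun hT' => le_iInf fun u => le_iInf fun hu => ?_
    rw [downCond]
    split_ifs with hcond
    · obtain ⟨hxeq, h1, h2⟩ := hcond
      rw [phiStar_eq_on vf ρc ρm w hρc hρcm hw u hu, ← EReal.coe_add, EReal.coe_le_coe_iff]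
      simp only [Prod.fst]
      have hxeq' : x + T' * u = χ := hxeq
      have h2' : t - T' ≤ (n : ℝ) * T := h2
      have hTu : T' * u = χ - x := by linarith
      have hT'ge : t0 ≤ T' := by simp only [ht0def]; linarith
      rw [hsum]
      have h4 : ρc * (T' * u) = ρc * (χ - x) := by rw [hTu]
      have hvfd2 : ρc * vf * ((x - χ) / vf) = ρc * (x - χ) := by
        field_simp
      have key : (0:ℝ) ≤ (T' - t0) * (ρc * vf - qout n) :=
        mul_nonneg (by linarith) (by linarith [hqn.2])
      clear_value t0 u0
      subst ht0def
      nlinarith [key, h4, hvfd2]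
    · rw [EReal.top_add_coe]
      exact le_top
end
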